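/- For random variables J_1, …, J_m and G on a finite probability space, I((J_1, …, J_m) ∧ G) ≤ Σ_{i=1}^m I(J_i ∧ (G, J_1, …, J_{i−1}, J_{i+1}, …, J_m)). -/

import Mathlib

open Finset

namespace SC

variable {Ω : Type*} [Fintype Ω]

/-- A probability mass function on a finite sample space. -/
structure FinPMF (Ω : Type*) [Fintype Ω] where
  p : Ω → ℝ
  nonneg : ∀ ω, 0 ≤ p ω
  sum_one : ∑ ω, p ω = 1

/-- Probability of an event. -/
noncomputable def prob (μ : FinPMF Ω) (E : Set Ω) : ℝ :=
  ∑ ω, E.indicator μ.p ω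

/-- Distribution (law) of a random variable. -/
noncomputable def dist (μ : FinPMF Ω) {α : Type*} (X : Ω → α) (a : α) : ℝ :=
  prob μ {ω | X ω = a}

/-- Shannon entropy (base 2) of a finite-valued random variable. -/
noncomputable def H (μ : FinPMF Ω) {α : Type*} [Fintype α] (X : Ω → α) : ℝ :=
  -∑ a, dist μ X a * Real.logb 2 (dist μ X a)

/-- Mutual information I(X ∧ Y). -/
noncomputable def mutInf (μ : FinPMF Ω) {α β : Type*} [Fintype α] [Fintype β]
    (X : Ω → α) (Y : Ω → β) : ℝ :=
  H μ X + H μ Y - H μ (fun ω => (X ω, Y ω))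

/-- Conditional entropy H(X | Y). -/
noncomputable def condH (μ : FinPMF Ω) {α β : Type*} [Fintype α] [Fintype β]
    (X : Ω → α) (Y : Ω → β) : ℝ :=
  H μ (fun ω => (X ω, Y ω)) - H μ Y

/-- Conditional mutual information I(X ∧ Y | Z). -/
noncomputable def condMutInf (μ : FinPMF Ω) {α β γ : Type*}
    [Fintype α] [Fintype β] [Fintype γ]
    (X : Ω → α) (Y : Ω → β) (Z : Ω → γ) : ℝ :=
  H μ (fun ω => (X ω, Z ω)) + H μ (fun ω => (Y ω, Z ω))
    - H μ (fun ω => (X ω, Y ω, Z ω)) - H μ Z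

/-- Independence of two random variables: the joint law factorizes. -/
def IndepRV (μ : FinPMF Ω) {α β : Type*} (X : Ω → α) (Y : Ω → β) : Prop :=
  ∀ a b, dist μ (fun ω => (X ω, Y ω)) (a, b) = dist μ X a * dist μ Y b

/-- Kullback–Leibler divergence (base 2) between two pmfs on a finite set. -/
noncomputable def klDiv {α : Type*} [Fintype α] (P Q : α → ℝ) : ℝ :=
  ∑ a, P a * Real.logb 2 (P a / Q a)

/-- The binary entropy function (base 2). -/
noncomputable def binH (x : ℝ) : ℝ :=
  -x * Real.logb 2 x - (1 - x) * Real.logb 2 (1 - x)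

end SC

/-! Write `J_{<k}` for `(J_0, …, J_{k-1})`. By the chain rule,
`I(J ∧ G) = H(G) - H(G | J) = ∑_i (H(G | J_{<i}) - H(G | J_{<i+1})) = ∑_i I(J_i ∧ G | J_{<i})`.
Each summand is `H(J_i | J_{<i}) - H(J_i | G, J_{<i})`, and submodularity of entropy gives
`H(J_i | J_{<i}) ≤ H(J_i)` and `H(J_i | G, J_{<i}) ≥ H(J_i | G, J_{≠i})`, since `J_{<i}` is part
of `J_{≠i}`; together these bound it by `I(J_i ∧ (G, J_{≠i}))`. -/

namespace SC

section Entropy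

lemma mul_logb_le_of_le {p q r s t : ℝ} (hp : 0 ≤ p) (hps : p ≤ s) (hsq : s ≤ q) (hsr : s ≤ r)
    (hqt : q ≤ t) :
    p * (Real.logb 2 q + Real.logb 2 r - Real.logb 2 s - Real.logb 2 t)
      ≤ (p * (q * r / (s * t)) - p) / Real.log 2 := by
  rcases hp.eq_or_lt with rfl | hp
  · simp
  have hs : 0 < s := hp.trans_le hps
  have hq : 0 < q := hs.trans_le hsq
  have hr : 0 < r := hs.trans_le hsr
  have ht : 0 < t := hq.trans_le hqt
  have hlogb : Real.logb 2 q + Real.logb 2 r - Real.logb 2 s - Real.logb 2 t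
      = Real.log (q * r / (s * t)) / Real.log 2 := by
    rw [Real.log_div (by positivity) (by positivity), Real.log_mul hq.ne' hr.ne',
      Real.log_mul hs.ne' ht.ne']
    simp only [Real.logb]
    ring
  rw [hlogb, mul_div_assoc', ← mul_sub_one]
  gcongr
  exact Real.log_le_sub_one_of_pos (by positivity)

variable {Ω : Type*} [Fintype Ω] (μ : FinPMF Ω)

open Classical in
lemma dist_eq_sum_ite {α : Type*} (X : Ω → α) (a : α) :
    dist μ X a = ∑ ω, if X ω = a then μ.p ω else 0 := by
  simp only [dist, prob, Set.indicator_apply, Set.mem_ofPred_eq]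

lemma dist_nonneg {α : Type*} (X : Ω → α) (a : α) : 0 ≤ dist μ X a :=
  Finset.sum_nonneg fun ω _ => Set.indicator_nonneg (fun ω _ => μ.nonneg ω) ω

lemma sum_dist_mul {α : Type*} [Fintype α] (X : Ω → α) (f : α → ℝ) :
    ∑ a, dist μ X a * f a = ∑ ω, μ.p ω * f (X ω) := by
  classical
  simp_rw [dist_eq_sum_ite, Finset.sum_mul, ite_mul, zero_mul]
  rw [Finset.sum_comm]
  simp

lemma sum_dist {α : Type*} [Fintype α] (X : Ω → α) : ∑ a, dist μ X a = 1 := by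
  simpa [μ.sum_one] using sum_dist_mul μ X 1

lemma sum_dist_prod_left {α β : Type*} [Fintype α] (X : Ω → α) (Y : Ω → β) (b : β) :
    ∑ a, dist μ (fun ω => (X ω, Y ω)) (a, b) = dist μ Y b := by
  classical
  simp_rw [dist_eq_sum_ite, Prod.ext_iff]
  rw [Finset.sum_comm]
  simp [ite_and]

lemma p_le_dist_self {α : Type*} (X : Ω → α) (ω : Ω) : μ.p ω ≤ dist μ X (X ω) := by
  classical
  rw [dist_eq_sum_ite]
  simpa using Finset.single_le_sum (f := fun ω' => if X ω' = X ω then μ.p ω' else 0)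
    (fun ω' _ => by split_ifs <;> simp [μ.nonneg]) (Finset.mem_univ ω)

lemma dist_self_le_of_fiber_subset {α β : Type*} (X : Ω → α) (Y : Ω → β) (ω : Ω)
    (h : ∀ ω', X ω' = X ω → Y ω' = Y ω) : dist μ X (X ω) ≤ dist μ Y (Y ω) := by
  classical
  simp_rw [dist_eq_sum_ite]
  refine Finset.sum_le_sum fun ω' _ => ?_
  by_cases hX : X ω' = X ω
  · simp [hX, h ω' hX]
  · simp only [hX, if_false]
    split_ifs <;> simp [μ.nonneg]

lemma H_eq_neg_sum {α : Type*} [Fintype α] (X : Ω → α) :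
    H μ X = -∑ ω, μ.p ω * Real.logb 2 (dist μ X (X ω)) := by
  rw [H, sum_dist_mul μ X fun a => Real.logb 2 (dist μ X a)]

lemma H_congr_of_fiber_iff {α β : Type*} [Fintype α] [Fintype β] (X : Ω → α) (Y : Ω → β)
    (h : ∀ ω ω', X ω = X ω' ↔ Y ω = Y ω') : H μ X = H μ Y := by
  classical
  simp_rw [H_eq_neg_sum, dist_eq_sum_ite, h]

lemma H_unit : H μ (fun _ => ()) = 0 := by
  simp [H_eq_neg_sum, dist_eq_sum_ite, μ.sum_one]

lemma H_unit_prod {α : Type*} [Fintype α] (X : Ω → α) : H μ (fun ω => ((), X ω)) = H μ X :=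
  H_congr_of_fiber_iff μ _ _ fun ω ω' => by simp [Prod.ext_iff]

section Submodularity

variable {A B C : Type*} [Fintype A] [Fintype B] [Fintype C] (X : Ω → A) (Y : Ω → B) (Z : Ω → C)

-- The total mass of `P(x,z) P(y,z) / P(z)` on the support of `P(x,y,z)`: Gibbs' inequality
-- compares `P(x,y,z)` with this sub-probability.
lemma sum_mul_div_dist_le_one :
    ∑ ω, μ.p ω * (dist μ (fun ω => (X ω, Z ω)) (X ω, Z ω) * dist μ (fun ω => (Y ω, Z ω)) (Y ω, Z ω)
      / (dist μ (fun ω => (X ω, Y ω, Z ω)) (X ω, Y ω, Z ω) * dist μ Z (Z ω))) ≤ 1 := by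
  set PXZ := dist μ (fun ω => (X ω, Z ω))
  set PYZ := dist μ (fun ω => (Y ω, Z ω))
  set P := dist μ (fun ω => (X ω, Y ω, Z ω))
  set PZ := dist μ Z
  rw [← sum_dist_mul μ (fun ω => (X ω, Y ω, Z ω))
    fun w => PXZ (w.1, w.2.2) * PYZ (w.2.1, w.2.2) / (P w * PZ w.2.2)]
  calc ∑ w, P w * (PXZ (w.1, w.2.2) * PYZ (w.2.1, w.2.2) / (P w * PZ w.2.2))
      ≤ ∑ w : A × B × C, PXZ (w.1, w.2.2) * PYZ (w.2.1, w.2.2) / PZ w.2.2 := by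
        refine Finset.sum_le_sum fun w _ => ?_
        rcases eq_or_ne (P w) 0 with h | h
        · rw [h, zero_mul]
          exact div_nonneg (mul_nonneg (dist_nonneg μ _ _) (dist_nonneg μ _ _)) (dist_nonneg μ _ _)
        · rw [← mul_div_assoc, mul_div_mul_left _ _ h]
    _ = ∑ z, (∑ x, PXZ (x, z)) * (∑ y, PYZ (y, z)) / PZ z := by
        simp only [Fintype.sum_prod_type, Finset.sum_mul, Finset.mul_sum, Finset.sum_div]
        rw [Finset.sum_comm_cycle]
        exact Finset.sum_congr rfl fun z _ => Finset.sum_comm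
    _ = 1 := by
        simp only [PXZ, PYZ, PZ, sum_dist_prod_left, mul_self_div_self, sum_dist]

theorem H_submodular :
    H μ (fun ω => (X ω, Y ω, Z ω)) + H μ Z
      ≤ H μ (fun ω => (X ω, Z ω)) + H μ (fun ω => (Y ω, Z ω)) := by
  set PXZ := fun ω => dist μ (fun ω => (X ω, Z ω)) (X ω, Z ω)
  set PYZ := fun ω => dist μ (fun ω => (Y ω, Z ω)) (Y ω, Z ω)
  set P := fun ω => dist μ (fun ω => (X ω, Y ω, Z ω)) (X ω, Y ω, Z ω)
  set PZ := fun ω => dist μ Z (Z ω)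
  have gibbs : ∑ ω, μ.p ω * (Real.logb 2 (PXZ ω) + Real.logb 2 (PYZ ω)
      - Real.logb 2 (P ω) - Real.logb 2 (PZ ω)) ≤ 0 := by
    calc _ ≤ ∑ ω, (μ.p ω * (PXZ ω * PYZ ω / (P ω * PZ ω)) - μ.p ω) / Real.log 2 := by
          refine Finset.sum_le_sum fun ω _ => mul_logb_le_of_le (μ.nonneg ω)
            (p_le_dist_self μ _ ω) ?_ ?_ ?_
          all_goals
            refine dist_self_le_of_fiber_subset μ _ _ ω fun ω' h => ?_
            simp_all [Prod.ext_iff]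
      _ = (∑ ω, μ.p ω * (PXZ ω * PYZ ω / (P ω * PZ ω)) - 1) / Real.log 2 := by
          rw [← Finset.sum_div, Finset.sum_sub_distrib, μ.sum_one]
      _ ≤ 0 := div_nonpos_of_nonpos_of_nonneg
          (sub_nonpos.2 (sum_mul_div_dist_le_one μ X Y Z)) (Real.log_nonneg one_le_two)
  simp only [mul_sub, mul_add, Finset.sum_sub_distrib, Finset.sum_add_distrib] at gibbs
  simp only [H_eq_neg_sum μ]
  linarith

end Submodularity

end Entropy

section Subfamilies

variable {Ω : Type*} {m : ℕ} {α : Fin m → Type*} (J : ∀ i, Ω → α i)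

-- A subfamily `J_S` is encoded as a tuple in `∀ j, Option (α j)` that is `none` off `S`, so
-- that all subfamilies share one type and are compared through `jointOn_eq_iff`.
def jointOn (S : Finset (Fin m)) (ω : Ω) : ∀ j, Option (α j) :=
  fun j => if j ∈ S then some (J j ω) else none

lemma jointOn_eq_iff (S : Finset (Fin m)) (ω ω' : Ω) :
    jointOn J S ω = jointOn J S ω' ↔ ∀ j ∈ S, J j ω = J j ω' := by
  refine funext_iff.trans (forall_congr' fun j => ?_)
  by_cases hj : j ∈ S <;> simp [jointOn, hj]

def initSeg (m k : ℕ) : Finset (Fin m) := {j | (j : ℕ) < k}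

end Subfamilies

section ChainRule

variable {Ω : Type*} [Fintype Ω] (μ : FinPMF Ω) {m : ℕ} {α : Fin m → Type*} [∀ i, Fintype (α i)]
  (J : ∀ i, Ω → α i) {γ : Type*} [Fintype γ] (G : Ω → γ)

theorem H_jointOn_submodular {κ : Type*} [Fintype κ] (K : Ω → κ) (S T : Finset (Fin m)) :
    H μ (fun ω => (K ω, jointOn J (S ∪ T) ω)) + H μ (fun ω => (K ω, jointOn J (S ∩ T) ω))
      ≤ H μ (fun ω => (K ω, jointOn J S ω)) + H μ (fun ω => (K ω, jointOn J T ω)) := by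
  have h := H_submodular μ (jointOn J S) (jointOn J T) fun ω => (K ω, jointOn J (S ∩ T) ω)
  rwa [H_congr_of_fiber_iff μ (fun ω => (jointOn J S ω, jointOn J T ω, K ω, jointOn J (S ∩ T) ω))
      (fun ω => (K ω, jointOn J (S ∪ T) ω)) ?_,
    H_congr_of_fiber_iff μ (fun ω => (jointOn J S ω, K ω, jointOn J (S ∩ T) ω))
      (fun ω => (K ω, jointOn J S ω)) ?_,
    H_congr_of_fiber_iff μ (fun ω => (jointOn J T ω, K ω, jointOn J (S ∩ T) ω))
      (fun ω => (K ω, jointOn J T ω)) ?_] at h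
  all_goals
    intro ω ω'
    simp only [Prod.ext_iff, jointOn_eq_iff, Finset.mem_union, Finset.mem_inter]
    aesop

lemma H_jointOn_empty : H μ (jointOn J ∅) = 0 := by
  rw [H_congr_of_fiber_iff μ _ (fun _ => ()) fun ω ω' => by simp [jointOn_eq_iff], H_unit]

lemma condH_jointOn_empty : condH μ G (jointOn J ∅) = H μ G := by
  rw [condH, H_jointOn_empty, sub_zero]
  exact H_congr_of_fiber_iff μ _ _ fun ω ω' => by simp [Prod.ext_iff, jointOn_eq_iff]

lemma mutInf_eq_condH_jointOn_empty_sub_univ :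
    mutInf μ (fun ω i => J i ω) G
      = condH μ G (jointOn J ∅) - condH μ G (jointOn J univ) := by
  have hJ : H μ (fun ω i => J i ω) = H μ (jointOn J univ) :=
    H_congr_of_fiber_iff μ _ _ fun ω ω' => by rw [jointOn_eq_iff, funext_iff]; simp
  have hJG : H μ (fun ω => ((fun i => J i ω), G ω)) = H μ (fun ω => (G ω, jointOn J univ ω)) :=
    H_congr_of_fiber_iff μ _ _ fun ω ω' => by
      rw [Prod.ext_iff, Prod.ext_iff, jointOn_eq_iff, funext_iff]
      simp [and_comm]
  rw [condH_jointOn_empty, mutInf, condH, hJ, hJG]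
  ring

lemma mutInf_eq_H_jointOn (i : Fin m) :
    mutInf μ (J i) (fun ω => (G ω, fun j : {j : Fin m // j ≠ i} => J j.1 ω))
      = H μ (fun ω => ((), jointOn J {i} ω)) + H μ (fun ω => (G ω, jointOn J (univ.erase i) ω))
        - H μ (fun ω => (G ω, jointOn J univ ω)) := by
  have hJi : H μ (J i) = H μ (fun ω => ((), jointOn J {i} ω)) :=
    H_congr_of_fiber_iff μ _ _ fun ω ω' => by simp [Prod.ext_iff, jointOn_eq_iff]
  have hG : H μ (fun ω => (G ω, fun j : {j : Fin m // j ≠ i} => J j.1 ω))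
      = H μ (fun ω => (G ω, jointOn J (univ.erase i) ω)) :=
    H_congr_of_fiber_iff μ _ _ fun ω ω' => by
      simp only [Prod.ext_iff, jointOn_eq_iff]
      simp [funext_iff]
  have hJiG : H μ (fun ω => (J i ω, G ω, fun j : {j : Fin m // j ≠ i} => J j.1 ω))
      = H μ (fun ω => (G ω, jointOn J univ ω)) :=
    H_congr_of_fiber_iff μ _ _ fun ω ω' => by
      simp only [Prod.ext_iff, jointOn_eq_iff]
      simp only [funext_iff, Subtype.forall, Finset.mem_univ, forall_const]
      constructor
      · rintro ⟨hi, hG, hne⟩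
        refine ⟨hG, fun j => ?_⟩
        rcases eq_or_ne j i with rfl | hj
        exacts [hi, hne j hj]
      · rintro ⟨hG, hall⟩
        exact ⟨hall i, hG, fun j _ => hall j⟩
  rw [mutInf, hJi, hG, hJiG]

lemma condH_initSeg_sub_succ_le (i : Fin m) :
    condH μ G (jointOn J (initSeg m i)) - condH μ G (jointOn J (initSeg m (i + 1)))
      ≤ mutInf μ (J i) (fun ω => (G ω, fun j : {j : Fin m // j ≠ i} => J j.1 ω)) := by
  have hJ := H_jointOn_submodular μ J (fun _ => ()) (initSeg m i) {i}
  have hGJ := H_jointOn_submodular μ J G (initSeg m (i + 1)) (univ.erase i)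
  have e1 : initSeg m i ∪ {i} = initSeg m (i + 1) := by ext j; simp [initSeg]; omega
  have e2 : initSeg m i ∩ {i} = ∅ := by ext j; simp [initSeg]
  have e3 : initSeg m (i + 1) ∪ univ.erase i = univ := by ext j; simp [initSeg]; omega
  have e4 : initSeg m (i + 1) ∩ univ.erase i = initSeg m i := by ext j; simp [initSeg]; omega
  rw [e1, e2] at hJ
  simp only [H_unit_prod, H_jointOn_empty] at hJ
  rw [e3, e4] at hGJ
  rw [mutInf_eq_H_jointOn, condH, condH, H_unit_prod]
  linarith

lemma condH_jointOn_empty_sub_univ_eq_sum :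
    condH μ G (jointOn J ∅) - condH μ G (jointOn J univ)
      = ∑ i : Fin m, (condH μ G (jointOn J (initSeg m i))
          - condH μ G (jointOn J (initSeg m (i + 1)))) := by
  have h0 : initSeg m 0 = ∅ := by ext j; simp [initSeg]
  have hm : initSeg m m = univ := by ext j; simp [initSeg]
  rw [Fin.sum_univ_eq_sum_range (fun k => condH μ G (jointOn J (initSeg m k))
    - condH μ G (jointOn J (initSeg m (k + 1)))), Finset.sum_range_sub', h0, hm]

end ChainRule

end SC

/-- I((J_1,…,J_m) ∧ G) ≤ Σ_i I(J_i ∧ (G, J_{M∖{i}})). -/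
theorem stmt_1 {Ω γ : Type*} [Fintype Ω] [Fintype γ] {m : ℕ}
    {α : Fin m → Type*} [∀ i, Fintype (α i)]
    (μ : SC.FinPMF Ω) (J : ∀ i, Ω → α i) (G : Ω → γ) :
    SC.mutInf μ (fun ω i => J i ω) G
      ≤ ∑ i : Fin m, SC.mutInf μ (J i)
          (fun ω => (G ω, fun j : {j : Fin m // j ≠ i} => J j.1 ω)) := by
  rw [SC.mutInf_eq_condH_jointOn_empty_sub_univ, SC.condH_jointOn_empty_sub_univ_eq_sum]
  exact Finset.sum_le_sum fun i _ => SC.condH_initSeg_sub_succ_le μ J G i
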